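/- Let N_T and N_R be integers with 2 ≤ N_T < N_R, and let μ_R, μ_T, r be reals with 0 < μ_R ≤ 1, 0 ≤ μ_T ≤ 1 and r > 0. Then ((N_T-1)/N_T)·(1-μ_R) + ((1-μ_R)/(N_T μ_R))·(1 - (1-μ_R)^{N_R}) + ((1-μ_T)^{N_T}/r)·((1-μ_R)/μ_R)·(1 - (1-μ_R)^{N_R}) ≤ 12 · [ max_{l₁ ∈ {1,...,N_R}} ( l₁·(1-μ_T)^{N_T}·(1-μ_R)^{l₁} / r ) + max_{l₂ ∈ {1,...,N_R}} ( l₂·(1-μ_R)^{l₂} / min{l₂, N_T} ) ]. -/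

import Mathlib

/-!
Write `x = 1 - μR`. The factor `x / μR * (1 - x ^ N_R)` shared by the last two terms is the
geometric sum `x + x² + ⋯ + x ^ N_R`, and it is at most `8 l x ^ l` for some `1 ≤ l ≤ N_R`:
take `l = 1` when `μR > 1/2`, `l = N_R` when `N_R μR ≤ 1/2`, and `l = ⌊1 / (2 μR)⌋` otherwise;
in the last two cases Bernoulli's inequality gives `x ^ l ≥ 1/2`. The term `l x ^ l` occurs in
both maxima (in the second one divided by `min l N_T ≤ N_T`), and the first term of the upper
bound is at most `x`, the `l₂ = 1` term of the second maximum. Hence the upper bound is at most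
`8 S₁ + 9 S₂ ≤ 12 (S₁ + S₂)` for the two maxima `S₁, S₂ ≥ 0`.
-/

open Finset

section GeometricSum

variable {μ : ℝ}

lemma one_sub_mul_le_one_sub_pow (hμ : μ ≤ 2) (n : ℕ) : 1 - n * μ ≤ (1 - μ) ^ n := by
  simpa [sub_eq_add_neg] using one_add_mul_le_pow (by linarith : -2 ≤ -μ) n

lemma half_le_one_sub_pow {n : ℕ} (hμ : μ ≤ 2) (hn : n * μ ≤ 1 / 2) : 1 / 2 ≤ (1 - μ) ^ n := by
  linarith [one_sub_mul_le_one_sub_pow hμ n]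

lemma one_sub_div_mul_one_sub_pow_le_one_sub_div (hμ0 : 0 < μ) (hμ1 : μ ≤ 1) (N : ℕ) :
    (1 - μ) / μ * (1 - (1 - μ) ^ N) ≤ (1 - μ) / μ := by
  have hx : 0 ≤ (1 - μ) / μ := div_nonneg (by linarith) hμ0.le
  nlinarith [pow_nonneg (by linarith : (0 : ℝ) ≤ 1 - μ) N]

lemma one_sub_div_mul_one_sub_pow_le_mul (hμ0 : 0 < μ) (hμ1 : μ ≤ 1) (N : ℕ) :
    (1 - μ) / μ * (1 - (1 - μ) ^ N) ≤ N * (1 - μ) := by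
  calc (1 - μ) / μ * (1 - (1 - μ) ^ N)
      ≤ (1 - μ) / μ * (N * μ) := by
        gcongr
        linarith [one_sub_mul_le_one_sub_pow (by linarith : μ ≤ 2) N]
    _ = N * (1 - μ) := by field_simp

lemma inv_le_eight_mul_floor_mul_pow_floor (hμ0 : 0 < μ) (hμ : μ ≤ 1 / 2) :
    1 / μ ≤ 8 * (⌊1 / (2 * μ)⌋₊ * (1 - μ) ^ ⌊1 / (2 * μ)⌋₊) := by
  set l := ⌊1 / (2 * μ)⌋₊
  have hy : 1 ≤ 1 / (2 * μ) := by rw [le_div_iff₀ (by positivity)]; linarith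
  have hl1 : (1 : ℝ) ≤ l := by exact_mod_cast Nat.one_le_floor_iff _ |>.mpr hy
  have hl : 1 / (4 * μ) ≤ l := by
    have := Nat.sub_one_lt_floor (1 / (2 * μ))
    have : 1 / (4 * μ) = 1 / (2 * μ) / 2 := by ring
    linarith
  have hxl : 1 / 2 ≤ (1 - μ) ^ l := by
    refine half_le_one_sub_pow (by linarith) ?_
    calc (l : ℝ) * μ ≤ 1 / (2 * μ) * μ := by gcongr; exact Nat.floor_le (by positivity)
      _ = 1 / 2 := by field_simp
  calc 1 / μ = 8 * (1 / (4 * μ) * (1 / 2)) := by field_simp; norm_num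
    _ ≤ 8 * (l * (1 - μ) ^ l) := by gcongr

theorem exists_mem_Icc_one_sub_div_mul_one_sub_pow_le (hμ0 : 0 < μ) (hμ1 : μ ≤ 1) {N : ℕ}
    (hN : 1 ≤ N) :
    ∃ l ∈ Icc 1 N, (1 - μ) / μ * (1 - (1 - μ) ^ N) ≤ 8 * (l * (1 - μ) ^ l) := by
  have hG := one_sub_div_mul_one_sub_pow_le_one_sub_div hμ0 hμ1 N
  by_cases hμ : 1 / 2 < μ
  · refine ⟨1, mem_Icc.mpr ⟨le_rfl, hN⟩, ?_⟩
    have : (1 - μ) / μ ≤ 2 * (1 - μ) := by rw [div_le_iff₀ hμ0]; nlinarith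
    simp only [Nat.cast_one, one_mul, pow_one]
    linarith
  by_cases hNμ : N * μ ≤ 1 / 2
  · refine ⟨N, mem_Icc.mpr ⟨hN, le_rfl⟩, ?_⟩
    have hxN := half_le_one_sub_pow (by linarith) hNμ
    have : (1 : ℝ) ≤ N := by exact_mod_cast hN
    nlinarith [one_sub_div_mul_one_sub_pow_le_mul hμ0 hμ1 N]
  push Not at hμ hNμ
  refine ⟨⌊1 / (2 * μ)⌋₊, mem_Icc.mpr ⟨?_, ?_⟩, ?_⟩
  · exact Nat.one_le_floor_iff _ |>.mpr (by rw [le_div_iff₀ (by positivity)]; linarith)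
  · refine Nat.floor_le_of_le ?_
    rw [div_le_iff₀ (by positivity)]
    linarith
  · calc (1 - μ) / μ * (1 - (1 - μ) ^ N) ≤ (1 - μ) / μ := hG
      _ ≤ 1 / μ := by gcongr; linarith
      _ ≤ _ := inv_le_eight_mul_floor_mul_pow_floor hμ0 hμ

end GeometricSum

theorem ndt_gap_le_twelve_NT_lt_NR (N_T N_R : ℕ) (hNT : 2 ≤ N_T) (hTN : N_T < N_R)
    (μR μT r : ℝ) (hμR0 : 0 < μR) (hμR1 : μR ≤ 1)
    (hμT1 : μT ≤ 1) (hr : 0 < r) :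
    (((N_T : ℝ) - 1) / N_T) * (1 - μR)
        + ((1 - μR) / (N_T * μR)) * (1 - (1 - μR) ^ N_R)
        + ((1 - μT) ^ N_T / r) * ((1 - μR) / μR) * (1 - (1 - μR) ^ N_R)
      ≤ 12 * ((Finset.Icc 1 N_R).sup'
            (Finset.nonempty_Icc.mpr (le_trans (le_trans (by norm_num) hNT) (le_of_lt hTN)))
            (fun l => (l : ℝ) * (1 - μT) ^ N_T * (1 - μR) ^ l / r)
          + (Finset.Icc 1 N_R).sup'
            (Finset.nonempty_Icc.mpr (le_trans (le_trans (by norm_num) hNT) (le_of_lt hTN)))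
            (fun l => (l : ℝ) * (1 - μR) ^ l / (min l N_T : ℕ))) := by
  have hNR : 1 ≤ N_R := by omega
  obtain ⟨l, hl, hG⟩ := exists_mem_Icc_one_sub_div_mul_one_sub_pow_le hμR0 hμR1 hNR
  obtain ⟨hl1, -⟩ := mem_Icc.mp hl
  set S₁ := (Icc 1 N_R).sup' _ (fun l => (l : ℝ) * (1 - μT) ^ N_T * (1 - μR) ^ l / r)
  set S₂ := (Icc 1 N_R).sup' _ (fun l => (l : ℝ) * (1 - μR) ^ l / (min l N_T : ℕ))
  have hA : 0 ≤ (1 - μT) ^ N_T / r := div_nonneg (pow_nonneg (by linarith) _) hr.le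
  have hS₂_one : 1 - μR ≤ S₂ :=
    le_sup'_of_le _ (mem_Icc.mpr ⟨le_rfl, hNR⟩) (by simp [min_eq_left (by omega : 1 ≤ N_T)])
  have hS₂_l : l * (1 - μR) ^ l / N_T ≤ S₂ := le_sup'_of_le _ hl <| by
    have : 0 < min l N_T := by omega
    gcongr
    exact_mod_cast min_le_right l N_T
  have hS₁_l : (1 - μT) ^ N_T / r * (l * (1 - μR) ^ l) ≤ S₁ :=
    le_sup'_of_le _ hl (le_of_eq (by ring))
  have hT₁ : ((N_T : ℝ) - 1) / N_T * (1 - μR) ≤ 1 - μR :=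
    mul_le_of_le_one_left (by linarith) (div_le_one_of_le₀ (by linarith) (Nat.cast_nonneg _))
  have hT₂ : (1 - μR) / (N_T * μR) * (1 - (1 - μR) ^ N_R) ≤ 8 * S₂ := by
    calc (1 - μR) / (N_T * μR) * (1 - (1 - μR) ^ N_R)
        = (1 - μR) / μR * (1 - (1 - μR) ^ N_R) / N_T := by field_simp
      _ ≤ 8 * (l * (1 - μR) ^ l) / N_T := by gcongr
      _ ≤ 8 * S₂ := by rw [mul_div_assoc]; gcongr
  have hT₃ : (1 - μT) ^ N_T / r * ((1 - μR) / μR) * (1 - (1 - μR) ^ N_R) ≤ 8 * S₁ := by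
    calc (1 - μT) ^ N_T / r * ((1 - μR) / μR) * (1 - (1 - μR) ^ N_R)
        = (1 - μT) ^ N_T / r * ((1 - μR) / μR * (1 - (1 - μR) ^ N_R)) := by ring
      _ ≤ (1 - μT) ^ N_T / r * (8 * (l * (1 - μR) ^ l)) := by gcongr
      _ = 8 * ((1 - μT) ^ N_T / r * (l * (1 - μR) ^ l)) := by ring
      _ ≤ 8 * S₁ := by gcongr
  have hS₁ : 0 ≤ S₁ := le_trans (by positivity) hS₁_l
  linarith
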